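/- Let K be a field, P ≥ 2 an integer, N := 2P − 1, and α ∈ K with α ≠ 0. Suppose τ : ℤ → K satisfies τ_n ≠ 0 for all n and satisfies the bilinear equation τ_{n+N+2}τ_n = γ_n·τ_{n+N+1}τ_{n+1} + α·τ_{n+N}τ_{n+2} for all n ∈ ℤ, with 2-periodic coefficient γ (γ_{n+2} = γ_n; write γ_0, γ_1 for its two values). Define u_n := τ_{n+3}τ_n/(τ_{n+2}τ_{n+1}), v^even_n := τ_{2n}/τ_{2n+2}, v^odd_n := τ_{2n+1}/τ_{2n+3}, and p^even_n := α·v^even_n/v^even_{n−P+1} + α⁻¹·(v^even_{n−P}/v^even_n − 1), with p^odd_n defined analogously from v^odd. Let L(p, v, ζ) := [[p + ζ, v], [−v⁻¹, 0]], M(u, v, ζ) := [[1 − α²·u·v⁻¹ − α·ζ, −α·u], [α·v⁻¹, 1]], and let G_n(ζ) := [[ζ + u_{2n+1} − κ, v^odd_n], [−(v^even_{n+1})⁻¹, −1]], where κ := α⁻¹·(1 − γ_0·γ_1). Then for all n ∈ ℤ and all ζ ∈ K, the intertwining relations L(p^even_n, v^even_n, ζ)·G_n(ζ) = G_{n−1}(ζ)·L(p^odd_n,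 v^odd_n, ζ) and M(v^even_n, v^even_{n−P+1}, ζ)·G_n(ζ) = G_{n−P}(ζ)·M(v^odd_n, v^odd_{n−P+1}, ζ) hold. -/

import Mathlib

/-- The Lax matrix `L(p, v, ζ)` of the discrete Toda lattice. -/
def laxL {K : Type*} [Field K] (p v ζ : K) : Matrix (Fin 2) (Fin 2) K :=
  !![p + ζ, v; -v⁻¹, 0]

/-- The Lax matrix `M(u, v, ζ)` (depending on the parameter `α`) of the discrete
Toda lattice. -/
def laxM {K : Type*} [Field K] (α u v ζ : K) : Matrix (Fin 2) (Fin 2) K :=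
  !![1 - α ^ 2 * u * v⁻¹ - α * ζ, -α * u; α * v⁻¹, 1]

/-!
Both relations are checked entry by entry. Writing `ν m = τ m / τ (m + 2)`, so that
`veven n = ν (2n)`, `vodd n = ν (2n + 1)` and `u m = ν m / ν (m + 1)`, the `L`-relation amounts
to the formulas `peven n = u (2n - 1) + u (2n) - κ` and `podd n = u (2n) + u (2n + 1) - κ`, and the
`M`-relation to two product identities between the `ν`'s. Divided by `τ (m + N + 2) τ (m + 2)`,
the bilinear equation at `m` reads `ν m - α ν (m + N) = γ m · ρ`, with `ρ` a cross-ratio of the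
strands `τ (m + ·)` and `τ (m + N + ·)`, and each needed identity follows from at most three
consecutive instances. Since `N` is odd, they all live in the windows of six values starting at
`2n - 2P` and at `2n - 1`, along which `γ` alternates between `γ 0` and `γ 1`.
-/
section

variable {K : Type*} [Field K]

theorem laxL_intertwines_gauge {p q v w w' y κ ζ : K} (hv : v ≠ 0) (hw : w ≠ 0)
    (hp : p = w' / v + v / w - κ) (hq : q = v / w + w / y - κ) :
    laxL p v ζ * !![ζ + w / y - κ, w; -y⁻¹, -1] =
      !![ζ + w' / v - κ, w'; -v⁻¹, -1] * laxL q w ζ := by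
  subst hp hq
  rw [laxL, laxL, Matrix.mul_fin_two, Matrix.mul_fin_two]
  simp only [EmbeddingLike.apply_eq_iff_eq, Matrix.vecCons_inj, and_true]
  refine ⟨⟨?_, ?_⟩, ?_, ?_⟩ <;> field_simp <;> ring

theorem laxM_intertwines_gauge {α a b c d y w' g κ ζ : K} (hb : b ≠ 0) (hκ : α * κ = 1 - g)
    (hg : (b - α * c) * (y⁻¹ - α / d) = g) (hw' : w' - α * a = b * c * (y⁻¹ - α / d)) :
    laxM α a b ζ * !![ζ + c / y - κ, c; -y⁻¹, -1] =
      !![ζ + w' / b - κ, w'; -b⁻¹, -1] * laxM α c d ζ := by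
  have hb' : b * b⁻¹ = 1 := mul_inv_cancel₀ hb
  set z := y⁻¹ - α / d
  rw [laxM, laxM, Matrix.mul_fin_two, Matrix.mul_fin_two]
  simp only [EmbeddingLike.apply_eq_iff_eq, Matrix.vecCons_inj, and_true]
  refine ⟨⟨?_, ?_⟩, ?_, ?_⟩
  · linear_combination (-(b⁻¹ * (1 - α ^ 2 * c * d⁻¹ - α * ζ) + α * d⁻¹)) * hw'
      + (α * a * b⁻¹ - α * c * d⁻¹) * (hg + hκ)
      + (α * c * z * ζ + z * (α ^ 2 * c ^ 2 * d⁻¹ - c - α * a)) * hb'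
  · linear_combination (α * c * b⁻¹ - 1) * hw' - c * hg - c * hκ + α * c ^ 2 * z * hb'
  · linear_combination (-b⁻¹) * hg - b⁻¹ * hκ + z * hb'
  · ring

/-- `b` and `c` play the windows `τ (m + ·)` and `τ (m + N + ·)` of a solution of the bilinear
equation, with `γ` read relative to the base point `m`. -/
def IsBilinearPair (α : K) (γ b c : ℤ → K) : Prop :=
  ∀ k, c (k + 2) * b k = γ k * (c (k + 1) * b (k + 1)) + α * (c k * b (k + 2))

theorem isBilinearPair_of_bilinear {α : K} {τ γ : ℤ → K} {N : ℤ} (hγ : Function.Periodic γ 2)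
    (hτ : ∀ m, τ (m + N + 2) * τ m =
      γ m * (τ (m + N + 1) * τ (m + 1)) + α * (τ (m + N) * τ (m + 2)))
    (j : ℤ) : IsBilinearPair α γ (fun k => τ (2 * j + k)) (fun k => τ (2 * j + N + k)) := by
  intro k
  rw [← hγ.int_mul j k, Int.cast_id]
  convert hτ (2 * j + k) using 3 <;> ring_nf

namespace IsBilinearPair

variable {α : K} {γ b c : ℤ → K}

theorem shift (h : IsBilinearPair α γ b c) :
    IsBilinearPair α (fun k => γ (k + 1)) (fun k => b (k + 1)) (fun k => c (k + 1)) := by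
  intro k
  simpa only [add_right_comm k 2 1] using h (k + 1)

/-- In the paper's notation: `peven n = u (2n - 1) + u (2n) - κ`. -/
theorem p_eq (h : IsBilinearPair α γ b c) (hα : α ≠ 0) (hb : ∀ k, b k ≠ 0)
    (hc : ∀ k, c k ≠ 0) (hγ : γ 2 = γ 0) :
    α * (c 1 / c 3) / (b 2 / b 4) + α⁻¹ * (b 0 / b 2 / (c 1 / c 3) - 1) =
      c 0 / c 2 / (c 1 / c 3) + c 1 / c 3 / (c 2 / c 4) - α⁻¹ * (1 - γ 0 * γ 1) := by
  have e0 := h 0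
  have e1 := h 1
  have e2 := h 2
  simp only [Int.reduceAdd, hγ] at e0 e1 e2
  field_simp [hb, hc]
  linear_combination c 3 ^ 2 * e0 + γ 0 * c 1 * c 3 * e1 - α * c 1 ^ 2 * e2

theorem p_eq_succ (h : IsBilinearPair α γ b c) (hα : α ≠ 0) (hb : ∀ k, b k ≠ 0)
    (hc : ∀ k, c k ≠ 0) (hγ₂ : γ 2 = γ 0) (hγ₃ : γ 3 = γ 1) :
    α * (c 2 / c 4) / (b 3 / b 5) + α⁻¹ * (b 1 / b 3 / (c 2 / c 4) - 1) =
      c 1 / c 3 / (c 2 / c 4) + c 2 / c 4 / (c 3 / c 5) - α⁻¹ * (1 - γ 0 * γ 1) := by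
  have := h.shift.p_eq hα (fun _ => hb _) (fun _ => hc _) hγ₃
  simpa only [Int.reduceAdd, hγ₂, mul_comm (γ 1)] using this

theorem sub_mul_sub_eq (h : IsBilinearPair α γ b c) (hb : ∀ k, b k ≠ 0)
    (hc : ∀ k, c k ≠ 0) (hγ₂ : γ 2 = γ 0) (hγ₃ : γ 3 = γ 1) :
    (b 2 / b 4 - α * (c 2 / c 4)) * ((c 3 / c 5)⁻¹ - α / (b 3 / b 5)) = γ 0 * γ 1 := by
  have e2 := h 2
  have e3 := h 3
  simp only [Int.reduceAdd, hγ₂, hγ₃] at e2 e3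
  field_simp [hb, hc]
  linear_combination (c 5 * b 3 - α * c 3 * b 5) * e2 + γ 0 * c 3 * b 3 * e3

theorem sub_eq_mul_sub (h : IsBilinearPair α γ b c) (hb : ∀ k, b k ≠ 0)
    (hc : ∀ k, c k ≠ 0) (hγ₃ : γ 3 = γ 1) :
    b 1 / b 3 - α * (c 1 / c 3) =
      b 2 / b 4 * (c 2 / c 4) * ((c 3 / c 5)⁻¹ - α / (b 3 / b 5)) := by
  have e1 := h 1
  have e3 := h 3
  simp only [Int.reduceAdd, hγ₃] at e1 e3
  field_simp [hb, hc]
  linear_combination b 4 * c 4 * e1 - b 2 * c 2 * e3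

end IsBilinearPair

end

/-- for odd `N = 2P - 1`, the gauge matrix `G_n(ζ)` intertwines the
even/odd reduced Toda Lax matrices:
`L^even_n G_n = G_{n-1} L^odd_n` and `M^even_n G_n = G_{n-P} M^odd_n`. -/
theorem gauge_intertwines_even_odd_lax {K : Type*} [Field K] (P : ℕ) (hP : 2 ≤ P)
    (α : K) (hα : α ≠ 0)
    (N : ℕ) (hNP : N = 2 * P - 1)
    (τ : ℤ → K) (hτ : ∀ n, τ n ≠ 0)
    (γ : ℤ → K) (hper : ∀ n : ℤ, γ (n + 2) = γ n)
    (hbil : ∀ n : ℤ, τ (n + N + 2) * τ n =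
      γ n * (τ (n + N + 1) * τ (n + 1)) + α * (τ (n + N) * τ (n + 2)))
    (u : ℤ → K) (hu : ∀ n : ℤ, u n = τ (n + 3) * τ n / (τ (n + 2) * τ (n + 1)))
    (veven vodd : ℤ → K)
    (hve : ∀ n : ℤ, veven n = τ (2 * n) / τ (2 * n + 2))
    (hvo : ∀ n : ℤ, vodd n = τ (2 * n + 1) / τ (2 * n + 3))
    (peven podd : ℤ → K)
    (hpe : ∀ n : ℤ, peven n =
      α * veven n / veven (n - P + 1) + α⁻¹ * (veven (n - P) / veven n - 1))
    (hpo : ∀ n : ℤ, podd n =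
      α * vodd n / vodd (n - P + 1) + α⁻¹ * (vodd (n - P) / vodd n - 1))
    (κ : K) (hκ : κ = α⁻¹ * (1 - γ 0 * γ 1))
    (G : ℤ → K → Matrix (Fin 2) (Fin 2) K)
    (hG : ∀ (n : ℤ) (ζ : K),
      G n ζ = !![ζ + u (2 * n + 1) - κ, vodd n; -(veven (n + 1))⁻¹, -1]) :
    ∀ (n : ℤ) (ζ : K),
      laxL (peven n) (veven n) ζ * G n ζ = G (n - 1) ζ * laxL (podd n) (vodd n) ζ ∧
      laxM α (veven n) (veven (n - P + 1)) ζ * G n ζ =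
        G (n - P) ζ * laxM α (vodd n) (vodd (n - P + 1)) ζ := by
  intro n ζ
  have hN : (N : ℤ) = 2 * P - 1 := by omega
  have hu' : ∀ j, u (2 * j + 1) = vodd j / veven (j + 1) := by
    intro j
    simp only [hu, hvo, hve, mul_add, mul_one, add_assoc, Int.reduceAdd]
    rw [div_div_div_eq]
    ring
  set b : ℤ → K := fun k => τ (2 * (n - P) + k) with hb
  set c : ℤ → K := fun k => τ (2 * (n - P) + N + k) with hc
  have hpair : IsBilinearPair α γ b c := isBilinearPair_of_bilinear hper hbil (n - P)
  have hb0 : ∀ k, b k ≠ 0 := fun _ => hτ _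
  have hc0 : ∀ k, c k ≠ 0 := fun _ => hτ _
  have hγ₂ : γ 2 = γ 0 := by simpa using hper 0
  have hγ₃ : γ 3 = γ 1 := by simpa using hper 1
  obtain ⟨e1, e2, e3, e4, e5, e6, e7, e8⟩ :
      veven n = c 1 / c 3 ∧ vodd n = c 2 / c 4 ∧ veven (n + 1) = c 3 / c 5 ∧
      vodd (n - 1) = c 0 / c 2 ∧ veven (n - P) = b 0 / b 2 ∧ vodd (n - P) = b 1 / b 3 ∧
      veven (n - P + 1) = b 2 / b 4 ∧ vodd (n - P + 1) = b 3 / b 5 := by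
    refine ⟨?_, ?_, ?_, ?_, ?_, ?_, ?_, ?_⟩ <;> simp only [hve, hvo, hb, hc, hN] <;> ring_nf
  rw [hG, hG, hG, hu', hu', hu', sub_add_cancel, hpe, hpo, hκ, e1, e2, e3, e4, e5, e6, e7, e8]
  exact ⟨laxL_intertwines_gauge (div_ne_zero (hc0 1) (hc0 3)) (div_ne_zero (hc0 2) (hc0 4))
      (hpair.p_eq hα hb0 hc0 hγ₂) (hpair.p_eq_succ hα hb0 hc0 hγ₂ hγ₃),
    laxM_intertwines_gauge (div_ne_zero (hb0 2) (hb0 4)) (by rw [mul_inv_cancel_left₀ hα])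
      (hpair.sub_mul_sub_eq hb0 hc0 hγ₂ hγ₃) (hpair.sub_eq_mul_sub hb0 hc0 hγ₃)⟩
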